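/- Every digraph with chromatic number at least (n−1)^2 + 1 contains every oriented path of length n−1. -/

import Mathlib

/-!
Induction on the length `n` of the path. Let `E` be `D` or its reverse, according to the
orientation of the last edge, and suppose `χ(D) > (n + 1)²`. Let `A` be the set of vertices
with at least `n + 1` out-neighbours in `E`. Outside `A` every out-degree is at most `n`, so
every subgraph there has a vertex of degree at most `2n` and that part is `(2n + 1)`-colourable;
hence `χ(D[A]) > n²` and by induction `A` contains the path without its last edge. Its last
vertex has `n + 1` out-neighbours, at most `n` of them on the path, so some other one extends it.
Infinite digraphs reduce to finite ones by the de Bruijn–Erdős compactness theorem.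
-/

/-- `ContainsOrientedPath D L σ` : the digraph `D` contains the oriented path with
`L` edges whose `i`-th edge is oriented forward when `σ i = true` and backward
when `σ i = false`. -/
def ContainsOrientedPath {V : Type*} (D : V → V → Prop) (L : ℕ) (σ : ℕ → Bool) : Prop :=
  ∃ x : Fin (L + 1) → V, Function.Injective x ∧
    ∀ i : ℕ, ∀ _ : i < L,
      if σ i then D (x ⟨i, by omega⟩) (x ⟨i + 1, by omega⟩)
      else D (x ⟨i + 1, by omega⟩) (x ⟨i, by omega⟩)

open Finset Function SimpleGraph

section

open scoped Classical

variable {V : Type*}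

def IsOrientedPath (D : V → V → Prop) (σ : ℕ → Bool) {L : ℕ} (x : Fin (L + 1) → V) : Prop :=
  Injective x ∧ ∀ i : ℕ, ∀ _ : i < L,
    if σ i then D (x ⟨i, by omega⟩) (x ⟨i + 1, by omega⟩)
    else D (x ⟨i + 1, by omega⟩) (x ⟨i, by omega⟩)

theorem IsOrientedPath.snoc {D : V → V → Prop} {σ : ℕ → Bool} {L : ℕ} {x : Fin (L + 1) → V}
    (hx : IsOrientedPath D σ x) {u : V} (hu : u ∉ Set.range x)
    (hlast : if σ L then D (x (Fin.last L)) u else D u (x (Fin.last L))) :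
    IsOrientedPath D σ (Fin.snoc x u : Fin (L + 2) → V) := by
  refine ⟨Fin.snoc_injective_of_injective hx.1 hu, fun i hi => ?_⟩
  rcases Nat.lt_succ_iff_lt_or_eq.mp hi with hi | rfl
  · have h1 : (⟨i, by omega⟩ : Fin (L + 2)) = Fin.castSucc ⟨i, by omega⟩ := rfl
    have h2 : (⟨i + 1, by omega⟩ : Fin (L + 2)) = Fin.castSucc ⟨i + 1, by omega⟩ := rfl
    rw [h1, h2, Fin.snoc_castSucc, Fin.snoc_castSucc]
    exact hx.2 i hi
  · have h1 : (⟨i, by omega⟩ : Fin (i + 2)) = Fin.castSucc (Fin.last i) := rfl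
    have h2 : (⟨i + 1, by omega⟩ : Fin (i + 2)) = Fin.last (i + 1) := rfl
    rw [h1, h2, Fin.snoc_castSucc, Fin.snoc_last]
    exact hlast

namespace SimpleGraph

variable (G : SimpleGraph V)

theorem colorable_induce_union {A B : Set V} {a b : ℕ} (hA : (G.induce A).Colorable a)
    (hB : (G.induce B).Colorable b) : (G.induce (A ∪ B)).Colorable (a + b) := by
  obtain ⟨CA, hCA⟩ := (colorable_iff_exists_bdd_nat_coloring a).mp hA
  obtain ⟨CB, hCB⟩ := (colorable_iff_exists_bdd_nat_coloring b).mp hB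
  let c : ↥(A ∪ B) → ℕ := fun v =>
    if h : v.1 ∈ A then CA ⟨v, h⟩ else a + CB ⟨v, v.2.resolve_left h⟩
  refine (colorable_iff_exists_bdd_nat_coloring _).mpr ⟨Coloring.mk c ?_, fun v => ?_⟩
  · rintro ⟨u, hu⟩ ⟨w, hw⟩ huw
    by_cases huA : u ∈ A <;> by_cases hwA : w ∈ A <;> simp only [c, huA, hwA, dite_true, dite_false]
    · exact CA.valid (v := ⟨u, huA⟩) (w := ⟨w, hwA⟩) huw
    · have := hCA ⟨u, huA⟩; omega
    · have := hCA ⟨w, hwA⟩; omega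
    · exact fun h => CB.valid (v := ⟨u, hu.resolve_left huA⟩) (w := ⟨w, hw.resolve_left hwA⟩) huw
        (by omega)
  · show c v < a + b
    by_cases hvA : v.1 ∈ A <;> simp only [c, hvA, dite_true, dite_false]
    · have := hCA ⟨v, hvA⟩; omega
    · have := hCB ⟨v, v.2.resolve_left hvA⟩; omega

theorem exists_coloring_of_erase [DecidableRel G.Adj] {k : ℕ} {t : Finset V} {v : V}
    (hv : #{u ∈ t | G.Adj v u} ≤ k) {c : V → Fin (k + 1)} (hc : ∀ u ∈ t.erase v, ∀ w ∈ t.erase v, G.Adj u w → c u ≠ c w) :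
    ∃ c' : V → Fin (k + 1), ∀ u ∈ t, ∀ w ∈ t, G.Adj u w → c' u ≠ c' w := by
  obtain ⟨col, -, hcol⟩ : ∃ col, col ∈ univ ∧ col ∉ image c {u ∈ t | G.Adj v u} :=
    exists_mem_notMem_of_card_lt_card (by simpa using card_image_le.trans_lt (Nat.lt_succ_of_le hv))
  have hfree : ∀ w ∈ t, G.Adj v w → c w ≠ col := fun w hw hvw h =>
    hcol (mem_image.mpr ⟨w, mem_filter.mpr ⟨hw, hvw⟩, h⟩)
  refine ⟨update c v col, fun u hu w hw huw => ?_⟩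
  rcases eq_or_ne u v with rfl | hu'
  · simpa [huw.ne'] using (hfree w hw huw).symm
  rcases eq_or_ne w v with rfl | hw'
  · simpa [hu'] using hfree u hu huw.symm
  simpa [hu', hw'] using hc u (mem_erase.mpr ⟨hu', hu⟩) w (mem_erase.mpr ⟨hw', hw⟩) huw

theorem colorable_induce_of_forall_exists_degree_le [DecidableRel G.Adj] {k : ℕ} {s : Finset V}
    (h : ∀ t ⊆ s, t.Nonempty → ∃ v ∈ t, #{u ∈ t | G.Adj v u} ≤ k) :
    (G.induce (s : Set V)).Colorable (k + 1) := by
  have key : ∀ t ⊆ s, ∃ c : V → Fin (k + 1), ∀ u ∈ t, ∀ w ∈ t, G.Adj u w → c u ≠ c w := by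
    intro t
    induction t using Finset.strongInduction with
    | H t ih =>
      intro hts
      obtain rfl | ht := t.eq_empty_or_nonempty
      · exact ⟨fun _ => 0, by simp⟩
      obtain ⟨v, hv, hdeg⟩ := h t hts ht
      obtain ⟨c, hc⟩ := ih (t.erase v) (erase_ssubset hv) ((erase_subset v t).trans hts)
      exact G.exists_coloring_of_erase hdeg hc
  obtain ⟨c, hc⟩ := key s subset_rfl
  exact ⟨Coloring.mk (fun v => c v) fun {u w} huw => hc u u.2 w w.2 huw⟩

theorem exists_fromRel_degree_le_two_mul (D : V → V → Prop) {s : Finset V} (hs : s.Nonempty)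
    {d : ℕ} (hd : ∀ v ∈ s, #{u ∈ s | u ≠ v ∧ D v u} ≤ d) :
    ∃ v ∈ s, #{u ∈ s | (fromRel D).Adj v u} ≤ 2 * d := by
  have in_eq_out : ∑ v ∈ s, #{u ∈ s | v ≠ u ∧ D u v} = ∑ v ∈ s, #{u ∈ s | u ≠ v ∧ D v u} :=
    sum_card_bipartiteAbove_eq_sum_card_bipartiteBelow (fun v u => v ≠ u ∧ D u v)
  refine exists_le_of_sum_le hs ?_
  calc ∑ v ∈ s, #{u ∈ s | (fromRel D).Adj v u}
      ≤ ∑ v ∈ s, (#{u ∈ s | u ≠ v ∧ D v u} + #{u ∈ s | v ≠ u ∧ D u v}) := by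
        refine sum_le_sum fun v _ => (card_le_card fun u => ?_).trans (card_union_le _ _)
        simp only [mem_filter, mem_union, fromRel_adj]
        tauto
    _ = 2 * ∑ v ∈ s, #{u ∈ s | u ≠ v ∧ D v u} := by rw [sum_add_distrib, in_eq_out, two_mul]
    _ ≤ ∑ _v ∈ s, 2 * d := by rw [mul_sum]; exact sum_le_sum fun v hv => by have := hd v hv; omega

theorem fromRel_flip (D : V → V → Prop) : fromRel (flip D) = fromRel D := by
  ext a b
  simp only [fromRel_adj, flip, or_comm]

theorem exists_finset_not_colorable_induce {k : ℕ} (h : ¬G.Colorable k) :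
    ∃ s : Finset V, ¬(G.induce (s : Set V)).Colorable k := by
  by_contra! hs
  refine h (nonempty_hom_of_forall_finite_subgraph_hom fun G' hG' => ?_)
  have hcol := hs hG'.toFinset
  rw [hG'.coe_toFinset] at hcol
  exact hcol.some.comp ⟨fun v => v, fun huv => G'.adj_sub huv⟩

theorem exists_isOrientedPath_of_not_colorable (D : V → V → Prop) (σ : ℕ → Bool) (n : ℕ)
    {s : Finset V} (hs : ¬((fromRel D).induce (s : Set V)).Colorable (n ^ 2)) :
    ∃ x : Fin (n + 1) → V, (∀ i, x i ∈ s) ∧ IsOrientedPath D σ x := by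
  induction n generalizing s with
  | zero =>
    obtain ⟨⟨v, hv⟩⟩ : Nonempty (s : Set V) := by
      by_contra h
      exact hs (@Colorable.of_isEmpty _ _ (not_nonempty_iff.mp h) _)
    exact ⟨fun _ => v, fun _ => hv, fun a b _ => Subsingleton.elim (α := Fin 1) a b,
      fun i hi => absurd hi i.not_lt_zero⟩
  | succ n ih =>
    set E : V → V → Prop := if σ n then D else flip D with hE
    have hfromRel : fromRel E = fromRel D := by
      rw [hE]; split_ifs
      · rfl
      · exact fromRel_flip D
    set A := {v ∈ s | n + 1 ≤ #{u ∈ s | u ≠ v ∧ E v u}} with hA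
    have hrest : ((fromRel D).induce ↑(s \ A)).Colorable (2 * n + 1) := by
      rw [← hfromRel]
      refine colorable_induce_of_forall_exists_degree_le _ fun t ht htne => ?_
      refine exists_fromRel_degree_le_two_mul E htne (d := n) fun v hv => ?_
      have hvA : v ∉ A := (mem_sdiff.mp (ht hv)).2
      have hvs : v ∈ s := (mem_sdiff.mp (ht hv)).1
      simp only [hA, mem_filter, hvs, true_and, not_le] at hvA
      exact (card_le_card (filter_subset_filter _ (ht.trans sdiff_subset))).trans (by omega)
    have hAcol : ¬((fromRel D).induce (A : Set V)).Colorable (n ^ 2) := fun hcol => hs <| by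
      have := colorable_induce_union _ hcol hrest
      rwa [← coe_union, union_sdiff_of_subset (filter_subset _ _),
        show n ^ 2 + (2 * n + 1) = (n + 1) ^ 2 by ring] at this
    obtain ⟨x, hxA, hx⟩ := ih hAcol
    have hy := (mem_filter.mp (hxA (Fin.last n))).2
    obtain ⟨u, hu, hux⟩ : ∃ u ∈ {u ∈ s | u ≠ x (Fin.last n) ∧ E (x (Fin.last n)) u},
        u ∉ (univ.image x).erase (x (Fin.last n)) := by
      refine exists_mem_notMem_of_card_lt_card ?_
      rw [card_erase_of_mem (mem_image_of_mem _ (mem_univ _)), card_image_of_injective _ hx.1,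
        card_univ, Fintype.card_fin]
      omega
    rw [mem_filter] at hu
    refine ⟨Fin.snoc x u, fun i => ?_, hx.snoc ?_ ?_⟩
    · induction i using Fin.lastCases with
      | last => simpa using hu.1
      | cast i => simpa using (filter_subset _ _ (hxA i))
    · rintro ⟨i, rfl⟩
      exact hux (mem_erase.mpr ⟨hu.2.1, mem_image_of_mem _ (mem_univ _)⟩)
    · have := hu.2.2
      rw [hE] at this
      split_ifs at this ⊢ <;> exact this

end SimpleGraph

end

theorem burr_universal_general {V : Type*} (D : V → V → Prop) (n : ℕ)
    (h : (((n - 1) ^ 2 + 1 : ℕ) : ℕ∞) ≤ (SimpleGraph.fromRel D).chromaticNumber)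
    (σ : ℕ → Bool) :
    ContainsOrientedPath D (n - 1) σ := by
  have hcol : ¬(fromRel D).Colorable ((n - 1) ^ 2) := fun hc => by
    have := h.trans hc.chromaticNumber_le
    norm_cast at this
    omega
  obtain ⟨s, hs⟩ := exists_finset_not_colorable_induce _ hcol
  obtain ⟨x, -, hx⟩ := exists_isOrientedPath_of_not_colorable D σ (n - 1) hs
  exact ⟨x, hx⟩

/-- Burr's theorem: every digraph with chromatic number at least `(n-1)^2 + 1`
contains every oriented path of length `n - 1`. -/
theorem burr_universal {V : Type*} (D : V → V → Prop) (n : ℕ) (hn : 1 ≤ n)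
    (h : (((n - 1) ^ 2 + 1 : ℕ) : ℕ∞) ≤ (SimpleGraph.fromRel D).chromaticNumber)
    (σ : ℕ → Bool) :
    ContainsOrientedPath D (n - 1) σ :=
  burr_universal_general D n h σ
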